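/- Hypocoercive Lyapunov dissipation: suppose κᵖ(t) ≡ 1 and κᶜ(t) ≡ κᶜ is constant, and u solves the relative guidance-by-repulsion equation on an interval I with u(t) ≠ 0 for all t ∈ I. Define L(t) := E(t) − (κᶜ/ν) (u(t)^⊥ · u'(t)). Then L is differentiable on I and satisfies L'(t) = −ν |u'(t) − (κᶜ/ν) u(t)^⊥|² ≤ 0 for all t ∈ I; in particular L is nonincreasing. -/

import Mathlib

open Real Filter MeasureTheory intervalIntegral
open scoped RealInnerProductSpace Topology

noncomputable section

/-- Perpendicular rotation in the plane: `(a, b)^⊥ = (-b, a)`. -/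
def perp (w : EuclideanSpace ℝ (Fin 2)) : EuclideanSpace ℝ (Fin 2) :=
  (WithLp.equiv 2 (Fin 2 → ℝ)).symm ![-(w 1), w 0]

/-- The relative guidance-by-repulsion equation
`u'' + (κᵖ(t) f_d(|u|) − f_e(|u|)) u + ν u' = κᶜ(t) u^⊥` holds at time `t`. -/
def SolvesRel (fd fe : ℝ → ℝ) (ν : ℝ) (κp κc : ℝ → ℝ)
    (u : ℝ → EuclideanSpace ℝ (Fin 2)) (t : ℝ) : Prop :=
  deriv (deriv u) t + (κp t * fd ‖u t‖ - fe ‖u t‖) • u t + ν • deriv u t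
    = κc t • perp (u t)

/-- The potential `P(w) = ∫_{r_p}^{‖w‖} r (f_d(r) − f_e(r)) dr`. -/
def pot (fd fe : ℝ → ℝ) (rp : ℝ) (w : EuclideanSpace ℝ (Fin 2)) : ℝ :=
  ∫ r in rp..‖w‖, r * (fd r - fe r)

/-! Differentiating `L`, the kinetic and potential terms give `⟪u', u''⟫ + f(|u|) ⟪u, u'⟫` and the
cross term gives `-(κᶜ/ν) ⟪u^⊥, u''⟫`, because `⟪u'^⊥, u'⟫ = 0`. Substituting `u''` from the
equation, the potential force cancels and what is left (friction `-ν |u'|²`, twice the rotational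
work `κᶜ ⟪u^⊥, u'⟫`, and `-(κᶜ²/ν) |u^⊥|²`) is exactly `-ν |u' - (κᶜ/ν) u^⊥|²`. Monotonicity on
the interval then follows from the mean value theorem. -/

lemma inner_perp_self (w : EuclideanSpace ℝ (Fin 2)) : ⟪perp w, w⟫ = 0 := by
  simp [PiLp.inner_apply, Fin.sum_univ_two, perp]
  ring

lemma norm_perp (w : EuclideanSpace ℝ (Fin 2)) : ‖perp w‖ = ‖w‖ := by
  simp [EuclideanSpace.norm_eq, Fin.sum_univ_two, perp, add_comm]

def perpCLM : EuclideanSpace ℝ (Fin 2) →L[ℝ] EuclideanSpace ℝ (Fin 2) :=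
  LinearMap.toContinuousLinearMap
    { toFun := perp
      map_add' := fun x y => by
        ext i
        fin_cases i <;> simp [perp, add_comm]
      map_smul' := fun c x => by
        ext i
        fin_cases i <;> simp [perp] }

section InnerProductSpace

variable {F : Type*} [NormedAddCommGroup F] [InnerProductSpace ℝ F]

lemma HasDerivAt.norm {f : ℝ → F} {f' : F} {t : ℝ} (hf : HasDerivAt f f' t) (h0 : f t ≠ 0) :
    HasDerivAt (fun s => ‖f s‖) (⟪f t, f'⟫ / ‖f t‖) t := by
  have hsq : ‖f t‖ ^ 2 ≠ 0 := by positivity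
  have h := hf.norm_sq.sqrt hsq
  simp only [Real.sqrt_sq (norm_nonneg _)] at h
  convert h using 1
  field_simp

end InnerProductSpace

lemma hasDerivAt_integral_of_continuousOn {g : ℝ → ℝ} {s : Set ℝ} {a b : ℝ}
    (hg : ContinuousOn g s) (hs : IsOpen s) (hs' : s.OrdConnected) (ha : a ∈ s) (hb : b ∈ s) :
    HasDerivAt (fun x => ∫ r in a..x, g r) (g b) b :=
  integral_hasDerivAt_right ((hg.mono (hs'.uIcc_subset ha hb)).intervalIntegrable)
    (hg.stronglyMeasurableAtFilter hs b hb) (hg.continuousAt (hs.mem_nhds hb))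

lemma HasDerivAt.pot {fd fe : ℝ → ℝ} {rp : ℝ} {u : ℝ → EuclideanSpace ℝ (Fin 2)}
    {u' : EuclideanSpace ℝ (Fin 2)} {t : ℝ}
    (hf : ContinuousOn (fun r => fd r - fe r) (Set.Ioi 0)) (hrp : 0 < rp)
    (hu : HasDerivAt u u' t) (h0 : u t ≠ 0) :
    HasDerivAt (fun s => pot fd fe rp (u s)) ((fd ‖u t‖ - fe ‖u t‖) * ⟪u t, u'⟫) t := by
  have hnorm : 0 < ‖u t‖ := norm_pos_iff.mpr h0
  have hint : HasDerivAt (fun x => ∫ r in rp..x, r * (fd r - fe r))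
      (‖u t‖ * (fd ‖u t‖ - fe ‖u t‖)) ‖u t‖ :=
    hasDerivAt_integral_of_continuousOn (continuousOn_id.mul hf) isOpen_Ioi
      Set.ordConnected_Ioi hrp hnorm
  refine (hint.comp t (hu.norm h0)).congr_deriv ?_
  rw [mul_comm ‖u t‖, mul_assoc, mul_div_cancel₀ _ hnorm.ne']

lemma lyapunov_rate_eq {x v a : EuclideanSpace ℝ (Fin 2)} {f ν κ : ℝ} (hν : ν ≠ 0)
    (heq : a + f • x + ν • v = κ • perp x) :
    ⟪v, a⟫ + f * ⟪x, v⟫ - κ / ν * (⟪perp x, a⟫ + ⟪perp v, v⟫)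
      = -ν * ‖v - (κ / ν) • perp x‖ ^ 2 := by
  obtain rfl : a = κ • perp x - f • x - ν • v := by
    rw [← heq]; abel
  simp only [inner_sub_right, real_inner_smul_right, inner_perp_self, norm_sub_sq_real,
    norm_smul, Real.norm_eq_abs, mul_pow, sq_abs, norm_perp, real_inner_self_eq_norm_sq,
    real_inner_comm x v, real_inner_comm (perp x) v]
  field_simp
  ring

lemma hasDerivAt_lyapunov {fd fe : ℝ → ℝ} {rp ν κc t : ℝ} {u : ℝ → EuclideanSpace ℝ (Fin 2)}
    (hf : ContinuousOn (fun r => fd r - fe r) (Set.Ioi 0)) (hrp : 0 < rp) (hν : ν ≠ 0)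
    (hu : HasDerivAt u (deriv u t) t) (hu' : HasDerivAt (deriv u) (deriv (deriv u) t) t)
    (hsol : SolvesRel fd fe ν (fun _ => 1) (fun _ => κc) u t) (h0 : u t ≠ 0) :
    HasDerivAt (fun s => ‖deriv u s‖ ^ 2 / 2 + pot fd fe rp (u s)
        - κc / ν * (inner ℝ (perp (u s)) (deriv u s) : ℝ))
      (-ν * ‖deriv u t - (κc / ν) • perp (u t)‖ ^ 2) t := by
  have hkinetic : HasDerivAt (fun s => ‖deriv u s‖ ^ 2 / 2) ⟪deriv u t, deriv (deriv u) t⟫ t :=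
    (hu'.norm_sq.div_const 2).congr_deriv (by ring)
  have hcross := ((perpCLM.hasFDerivAt.comp_hasDerivAt t hu).inner ℝ hu').const_mul (κc / ν)
  have heq : deriv (deriv u) t + (fd ‖u t‖ - fe ‖u t‖) • u t + ν • deriv u t
      = κc • perp (u t) := by
    simpa only [SolvesRel, one_mul] using hsol
  exact ((hkinetic.add (hu.pot hf hrp h0)).sub hcross).congr_deriv (lyapunov_rate_eq hν heq)

lemma antitoneOn_of_hasDerivAt_nonpos {f f' : ℝ → ℝ} {D : Set ℝ} (hD : Convex ℝ D)
    (hf : ∀ x ∈ D, HasDerivAt f (f' x) x) (hf' : ∀ x ∈ D, f' x ≤ 0) : AntitoneOn f D :=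
  antitoneOn_of_hasDerivWithinAt_nonpos hD (fun x hx => (hf x hx).continuousAt.continuousWithinAt)
    (fun x hx => (hf x (interior_subset hx)).hasDerivWithinAt)
    (fun x hx => hf' x (interior_subset hx))

theorem hypocoercive_lyapunov_dissipation_general
    (fd fe : ℝ → ℝ) (rp : ℝ) (hrp : 0 < rp)
    (hfd_lip : LocallyLipschitzOn (Set.Ioi (0:ℝ)) fd)
    (hfe_lip : LocallyLipschitzOn (Set.Ioi (0:ℝ)) fe)
    (ν : ℝ) (hν : 0 < ν) (κc : ℝ)
    (I : Set ℝ) (hI : I.OrdConnected)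
    (u : ℝ → EuclideanSpace ℝ (Fin 2)) (hu : ContDiff ℝ 2 u)
    (hsol : ∀ t ∈ I, SolvesRel fd fe ν (fun _ => 1) (fun _ => κc) u t)
    (hne : ∀ t ∈ I, u t ≠ 0) :
    (∀ t ∈ I,
      HasDerivAt (fun s => ‖deriv u s‖ ^ 2 / 2 + pot fd fe rp (u s)
          - κc / ν * (inner ℝ (perp (u s)) (deriv u s) : ℝ))
        (-ν * ‖deriv u t - (κc / ν) • perp (u t)‖ ^ 2) t ∧
      -ν * ‖deriv u t - (κc / ν) • perp (u t)‖ ^ 2 ≤ 0) ∧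
    AntitoneOn (fun s => ‖deriv u s‖ ^ 2 / 2 + pot fd fe rp (u s)
        - κc / ν * (inner ℝ (perp (u s)) (deriv u s) : ℝ)) I := by
  have hf : ContinuousOn (fun r => fd r - fe r) (Set.Ioi 0) :=
    hfd_lip.continuousOn.sub hfe_lip.continuousOn
  have hu₁ : Differentiable ℝ u := hu.differentiable two_ne_zero
  have hu₂ : Differentiable ℝ (deriv u) := hu.differentiable_deriv_two
  have hderiv : ∀ t ∈ I, HasDerivAt (fun s => ‖deriv u s‖ ^ 2 / 2 + pot fd fe rp (u s)
      - κc / ν * (inner ℝ (perp (u s)) (deriv u s) : ℝ))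
        (-ν * ‖deriv u t - (κc / ν) • perp (u t)‖ ^ 2) t := fun t ht =>
    hasDerivAt_lyapunov hf hrp hν.ne' (hu₁ t).hasDerivAt (hu₂ t).hasDerivAt (hsol t ht) (hne t ht)
  have hdissipative : ∀ t, -ν * ‖deriv u t - (κc / ν) • perp (u t)‖ ^ 2 ≤ 0 := fun t =>
    mul_nonpos_of_nonpos_of_nonneg (neg_nonpos.mpr hν.le) (sq_nonneg _)
  exact ⟨fun t ht => ⟨hderiv t ht, hdissipative t⟩,
    antitoneOn_of_hasDerivAt_nonpos hI.convex hderiv fun t _ => hdissipative t⟩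

/-- Hypocoercive Lyapunov dissipation: with `κᵖ ≡ 1` and constant `κᶜ`,
the function `L(t) = E(t) − (κᶜ/ν)(u^⊥·u')` satisfies
`L'(t) = −ν|u' − (κᶜ/ν) u^⊥|² ≤ 0`; in particular `L` is nonincreasing on `I`. -/
theorem hypocoercive_lyapunov_dissipation
    (fd fe : ℝ → ℝ) (rp γm : ℝ) (hrp : 0 < rp) (hγm : 0 < γm)
    (hfd_lip : LocallyLipschitzOn (Set.Ioi (0:ℝ)) fd)
    (hfe_lip : LocallyLipschitzOn (Set.Ioi (0:ℝ)) fe)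
    (hf_neg : ∀ r : ℝ, 0 < r → r < rp → fd r - fe r < 0)
    (hf_nonneg : ∀ r : ℝ, rp ≤ r → 0 ≤ fd r - fe r)
    (hf_deriv : 0 < deriv (fun r => fd r - fe r) rp)
    (hfd_nonneg : ∀ r : ℝ, 0 < r → 0 ≤ fd r)
    (hfd_bdd : ∃ C : ℝ, ∀ r : ℝ, 0 < r → fd r ≤ C)
    (hfd_lim : Filter.Tendsto fd Filter.atTop (nhds γm))
    (hfe_nonneg : ∀ r : ℝ, 0 < r → 0 ≤ fe r)
    (hfe_div : ¬ MeasureTheory.IntegrableOn (fun r => r * fe r) (Set.Ioc 0 rp))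
    (hfe_lim : Filter.Tendsto fe Filter.atTop (nhds 0))
    (ν : ℝ) (hν : 0 < ν) (κc : ℝ)
    (I : Set ℝ) (hI : I.OrdConnected)
    (u : ℝ → EuclideanSpace ℝ (Fin 2)) (hu : ContDiff ℝ 2 u)
    (hsol : ∀ t ∈ I, SolvesRel fd fe ν (fun _ => 1) (fun _ => κc) u t)
    (hne : ∀ t ∈ I, u t ≠ 0) :
    (∀ t ∈ I,
      HasDerivAt (fun s => ‖deriv u s‖ ^ 2 / 2 + pot fd fe rp (u s)
          - κc / ν * (inner ℝ (perp (u s)) (deriv u s) : ℝ))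
        (-ν * ‖deriv u t - (κc / ν) • perp (u t)‖ ^ 2) t ∧
      -ν * ‖deriv u t - (κc / ν) • perp (u t)‖ ^ 2 ≤ 0) ∧
    AntitoneOn (fun s => ‖deriv u s‖ ^ 2 / 2 + pot fd fe rp (u s)
        - κc / ν * (inner ℝ (perp (u s)) (deriv u s) : ℝ)) I :=
  hypocoercive_lyapunov_dissipation_general fd fe rp hrp hfd_lip hfe_lip ν hν κc I hI u hu hsol hne
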